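/- Let V and W be infinite-dimensional vector spaces over a division ring D. Every nontrivial sub-bimodule of L(V,W) (an (L(W),L(V))-sub-bimodule that is neither 0 nor all of L(V,W)) has the form { T ∈ L(V,W) : rank T < e } for a unique infinite cardinal e ≤ min(dim V, dim W). -/

import Mathlib

universe u

/-- `I` is a sub-bimodule of `L(V,W)`: closed under addition, under left
composition with endomorphisms of `W`, and under right composition with
endomorphisms of `V`. -/
def IsBiSubmodule {D V W : Type u} [DivisionRing D]
    [AddCommGroup V] [Module D V] [AddCommGroup W] [Module D W]
    (I : Set (V →ₗ[D] W)) : Prop :=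
  (0 : V →ₗ[D] W) ∈ I ∧ (∀ S T : V →ₗ[D] W, S ∈ I → T ∈ I → S + T ∈ I) ∧
    (∀ S ∈ I, ∀ A : W →ₗ[D] W, A.comp S ∈ I) ∧
    (∀ S ∈ I, ∀ A : V →ₗ[D] V, S.comp A ∈ I)

/-! Sub-bimodules are downward closed for rank, since `rank T ≤ rank S` lets one write
`T = A ∘ S ∘ B`; so `I = {T | rank T < e}` with `e` the supremum of the successors of the
ranks occurring in `I`. A nonzero `I` contains every rank-one map and hence, being closed
under sums, every finite-rank map, so `ℵ₀ ≤ e`; a proper `I` forces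
`e ≤ min (dim V) (dim W)`, and below that bound every cardinal is the rank of some map,
which makes `e` unique. -/

open Cardinal LinearMap

variable {D V W : Type u} [DivisionRing D] [AddCommGroup V] [Module D V]
  [AddCommGroup W] [Module D W]

namespace LinearMap

theorem rank_le_min (T : V →ₗ[D] W) : T.rank ≤ min (Module.rank D V) (Module.rank D W) :=
  le_min T.rank_le_domain T.rank_le_range

theorem exists_rank_eq {c : Cardinal.{u}} (hV : c ≤ Module.rank D V)
    (hW : c ≤ Module.rank D W) : ∃ T : V →ₗ[D] W, T.rank = c := by
  have hc : Module.rank D (c.out →₀ D) = c := by rw [rank_finsupp_self', mk_out]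
  obtain ⟨i, hi⟩ := rank_le_iff_exists_linearMap.mp (hc.trans_le hV)
  obtain ⟨j, hj⟩ := rank_le_iff_exists_linearMap.mp (hc.trans_le hW)
  obtain ⟨p, hp⟩ := i.exists_leftInverse_of_injective (ker_eq_bot.mpr hi)
  have hp_surj : range p = ⊤ :=
    range_eq_top.mpr fun x => ⟨i x, by simpa using LinearMap.congr_fun hp x⟩
  exact ⟨j ∘ₗ p, by rw [LinearMap.rank, range_comp_of_range_eq_top j hp_surj,
    rank_range_of_injective j hj, hc]⟩

/-- Send `range T` injectively into `range S`, lift it through `S`, and undo the embedding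
on the left. -/
theorem exists_comp_comp_eq_of_rank_le {S T : V →ₗ[D] W} (h : T.rank ≤ S.rank) :
    ∃ (A : W →ₗ[D] W) (B : V →ₗ[D] V), A ∘ₗ S ∘ₗ B = T := by
  obtain ⟨j, hj⟩ := rank_le_iff_exists_linearMap.mp h
  obtain ⟨s, hs⟩ := S.rangeRestrict.exists_rightInverse_of_surjective S.range_rangeRestrict
  obtain ⟨l, hl⟩ := ((range S).subtype ∘ₗ j).exists_leftInverse_of_injective
    (ker_eq_bot.mpr (Subtype.val_injective.comp hj))
  refine ⟨(range T).subtype ∘ₗ l, s ∘ₗ j ∘ₗ T.rangeRestrict, ?_⟩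
  ext x
  have hSs : S (s (j (T.rangeRestrict x))) = (j (T.rangeRestrict x) : W) :=
    congr_arg Subtype.val (LinearMap.congr_fun hs _)
  have hlj : l (j (T.rangeRestrict x)) = T.rangeRestrict x := LinearMap.congr_fun hl _
  simp [hSs, hlj]

theorem exists_sum_eq_of_finiteDimensional_range (T : V →ₗ[D] W)
    [FiniteDimensional D (range T)] :
    ∃ (n : ℕ) (f : Fin n → V →ₗ[D] W), (∀ i, (f i).rank ≤ 1) ∧ ∑ i, f i = T := by
  let b := Module.finBasis D (range T)
  refine ⟨_, fun i => toSpanSingleton D W (b i) ∘ₗ b.coord i ∘ₗ T.rangeRestrict,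
    fun i => ?_, ?_⟩
  · calc _ ≤ (toSpanSingleton D W (b i)).rank := rank_comp_le_left _ _
      _ ≤ 1 := (rank_le_domain _).trans (Module.rank_self D).le
  · ext x
    have h := congr_arg Subtype.val (b.sum_repr (T.rangeRestrict x))
    simp only [Submodule.coe_sum, Submodule.coe_smul] at h
    simpa using h

end LinearMap

namespace IsBiSubmodule

variable {I : Set (V →ₗ[D] W)}

theorem mem_of_rank_le (hI : IsBiSubmodule I) {S T : V →ₗ[D] W} (hS : S ∈ I)
    (h : T.rank ≤ S.rank) : T ∈ I := by
  obtain ⟨A, B, rfl⟩ := exists_comp_comp_eq_of_rank_le h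
  exact hI.2.2.1 _ (hI.2.2.2 S hS B) A

theorem mem_of_finiteDimensional_range (hI : IsBiSubmodule I) (hne0 : I ≠ {0})
    (T : V →ₗ[D] W) [FiniteDimensional D (range T)] : T ∈ I := by
  obtain ⟨S, hS, hS0⟩ : ∃ S ∈ I, S ≠ 0 := by
    by_contra! h
    exact hne0 (Set.eq_singleton_iff_unique_mem.mpr ⟨hI.1, h⟩)
  have hS_rank : 1 ≤ S.rank :=
    Cardinal.one_le_iff_ne_zero.mpr fun h => hS0 (range_eq_bot.mp (Submodule.rank_eq_zero.mp h))
  obtain ⟨n, f, hf, rfl⟩ := T.exists_sum_eq_of_finiteDimensional_range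
  exact Finset.sum_induction f (· ∈ I) hI.2.1 hI.1
    fun i _ => hI.mem_of_rank_le hS ((hf i).trans hS_rank)

theorem exists_eq_setOf_rank_lt (hI : IsBiSubmodule I) :
    ∃ e : Cardinal.{u}, I = {T | T.rank < e} := by
  have : Nonempty I := ⟨⟨0, hI.1⟩⟩
  let f : I → Cardinal.{u} := fun S => Order.succ (S : V →ₗ[D] W).rank
  refine ⟨⨆ S, f S, Set.ext fun T => ⟨fun hT => ?_, fun hT => ?_⟩⟩
  · exact (Order.lt_succ _).trans_le (le_ciSup (f := f) bddAbove_of_small ⟨T, hT⟩)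
  · have hT : T.rank < _ := hT
    by_contra hTI
    refine (ciSup_le fun S => Order.succ_le_of_lt ?_).not_gt hT
    exact lt_of_not_ge fun h => hTI (hI.mem_of_rank_le S.2 h)

end IsBiSubmodule

theorem le_of_setOf_rank_lt_subset {e e' : Cardinal.{u}} (hV : e ≤ Module.rank D V)
    (hW : e ≤ Module.rank D W)
    (h : {T : V →ₗ[D] W | T.rank < e} ⊆ {T | T.rank < e'}) : e ≤ e' := by
  by_contra! he'
  obtain ⟨T, hT⟩ := exists_rank_eq (V := V) (W := W) (he'.le.trans hV) (he'.le.trans hW)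
  exact (h (show T.rank < e from hT ▸ he')).ne hT

theorem stmt_19 {D V W : Type u} [DivisionRing D]
    [AddCommGroup V] [Module D V] [AddCommGroup W] [Module D W]
    (hV : ¬ FiniteDimensional D V) (hW : ¬ FiniteDimensional D W)
    (I : Set (V →ₗ[D] W)) (hI : IsBiSubmodule I)
    (hne0 : I ≠ {0}) (hneuniv : I ≠ Set.univ) :
    ∃! e : Cardinal.{u}, Cardinal.aleph0 ≤ e ∧
      e ≤ min (Module.rank D V) (Module.rank D W) ∧
      I = {T : V →ₗ[D] W | Module.rank D (LinearMap.range T) < e} := by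
  have hVω : ℵ₀ ≤ Module.rank D V := not_lt.mp (hV ∘ Module.rank_lt_aleph0_iff.mp)
  have hWω : ℵ₀ ≤ Module.rank D W := not_lt.mp (hW ∘ Module.rank_lt_aleph0_iff.mp)
  obtain ⟨e, rfl⟩ := hI.exists_eq_setOf_rank_lt
  have he_min : e ≤ min (Module.rank D V) (Module.rank D W) := by
    by_contra! he
    exact hneuniv (Set.eq_univ_of_forall fun T => T.rank_le_min.trans_lt he)
  refine ⟨e, ⟨aleph0_le.mpr fun n => ?_, he_min, rfl⟩, fun e' ⟨_, he'_min, he'⟩ => ?_⟩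
  · have hn := natCast_lt_aleph0 (n := n)
    obtain ⟨T, hT⟩ := exists_rank_eq (V := V) (W := W) (hn.le.trans hVω) (hn.le.trans hWω)
    have : FiniteDimensional D (range T) :=
      Module.rank_lt_aleph0_iff.mp (hT.trans_lt hn)
    exact hT ▸ (hI.mem_of_finiteDimensional_range hne0 T).le
  · have hmin := le_min_iff.mp he_min
    have hmin' := le_min_iff.mp he'_min
    exact le_antisymm (le_of_setOf_rank_lt_subset hmin'.1 hmin'.2 he'.symm.subset)
      (le_of_setOf_rank_lt_subset hmin.1 hmin.2 he'.subset)
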